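/- arXiv:2305.06281 — 2 statements merged into one kernel-verified Lean document; each statement's English description precedes it below -/
import Mathlib

section
/- Let p > 0 and W(x) = |x|^p, and let g_a(y) = (a/π)^{1/4}·e^{−a y²/2}. Then there exist constants C > 0 and γ₀ > 0 such that for all a ≥ 1 and all x ∈ ℝ, |(W ∗ g_a²)(x) − W(x)| ≤ C·a^{−γ₀/2}·(1 + |x|^p). -/
/-!
Since `g_a²` is a probability density, the error is `∫ (|x - y|^p - |x|^p) g_a(y)² dy`.
Pointwise, `||x - y|^p - |x|^p| ≤ K (1 + |x|^p) (|y| + |y|^p)`: for `p ≤ 1` by subadditivity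
of `t ↦ t^p`, for `p ≥ 1` by the mean value theorem. The absolute moments of `g_a²` scale
exactly, `∫ |y|^q g_a(y)² dy = Γ((q + 1)/2)/√π · a^{-q/2}`, so the error is
`O((1 + |x|^p) a^{-min(1, p)/2})`.
-/

open MeasureTheory Real

/-- The `L²`-normalised gaussian `g_a(y) = (a/π)^{1/4} e^{-a y²/2}`. -/
noncomputable def gauss (a y : ℝ) : ℝ := (a / π) ^ ((1 : ℝ) / 4) * Real.exp (-a * y ^ 2 / 2)

lemma abs_rpow_sub_rpow_le_abs_sub_rpow {p s t : ℝ} (hp₀ : 0 ≤ p) (hp₁ : p ≤ 1)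
    (hs : 0 ≤ s) (ht : 0 ≤ t) : |s ^ p - t ^ p| ≤ |s - t| ^ p := by
  have key : ∀ u v : ℝ, 0 ≤ u → 0 ≤ v → u ^ p - v ^ p ≤ |u - v| ^ p := by
    intro u v hu hv
    have hle : u ≤ v + |u - v| := by linarith [le_abs_self (u - v)]
    have := (rpow_le_rpow hu hle hp₀).trans (rpow_add_le_add_rpow hv (abs_nonneg _) hp₀ hp₁)
    linarith
  rw [abs_sub_le_iff]
  exact ⟨key s t hs ht, abs_sub_comm s t ▸ key t s ht hs⟩

lemma abs_rpow_sub_rpow_le_mul_max {p s t : ℝ} (hp : 1 ≤ p) (hs : 0 ≤ s) (ht : 0 ≤ t) :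
    |s ^ p - t ^ p| ≤ p * max s t ^ (p - 1) * |s - t| := by
  have hderiv : ∀ u ∈ Set.Icc 0 (max s t),
      HasDerivWithinAt (fun u : ℝ => u ^ p) (p * u ^ (p - 1)) (Set.Icc 0 (max s t)) u :=
    fun u _ => (hasDerivAt_rpow_const (Or.inr hp)).hasDerivWithinAt
  have hbound : ∀ u ∈ Set.Icc 0 (max s t), ‖p * u ^ (p - 1)‖ ≤ p * max s t ^ (p - 1) :=
    fun u hu => by
      rw [norm_of_nonneg (by have := hu.1; positivity)]
      gcongr
      exacts [hu.1, hu.2]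
  simpa only [norm_eq_abs] using
    (convex_Icc 0 (max s t)).norm_image_sub_le_of_norm_hasDerivWithin_le hderiv hbound
      ⟨ht, le_max_right s t⟩ ⟨hs, le_max_left s t⟩

lemma rpow_sub_one_le_one_add_rpow {p t : ℝ} (hp : 1 ≤ p) (ht : 0 ≤ t) :
    t ^ (p - 1) ≤ 1 + t ^ p := by
  rcases le_total t 1 with h | h
  · linarith [rpow_le_one ht h (by linarith : 0 ≤ p - 1), rpow_nonneg ht p]
  · linarith [rpow_le_rpow_of_exponent_le h (by linarith : p - 1 ≤ p)]

lemma abs_rpow_sub_rpow_le_of_one_le {p s t : ℝ} (hp : 1 ≤ p) (hs : 0 ≤ s) (ht : 0 ≤ t) :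
    |s ^ p - t ^ p| ≤ p * 2 ^ (p - 1) * (1 + t ^ p) * (|s - t| + |s - t| ^ p) := by
  refine (abs_rpow_sub_rpow_le_mul_max hp hs ht).trans ?_
  set d := |s - t|
  have hd : 0 ≤ d := abs_nonneg _
  have hmax : max s t ≤ t + d := max_le (by linarith [le_abs_self (s - t)]) (by linarith)
  have htp : 0 ≤ t ^ p := rpow_nonneg ht p
  have hdp : 0 ≤ d ^ p := rpow_nonneg hd p
  rcases le_total d t with hdt | htd
  · calc p * max s t ^ (p - 1) * d
        ≤ p * (2 * t) ^ (p - 1) * d := by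
          gcongr
          linarith
      _ = p * 2 ^ (p - 1) * t ^ (p - 1) * d := by rw [mul_rpow zero_le_two ht]; ring
      _ ≤ p * 2 ^ (p - 1) * (1 + t ^ p) * (d + d ^ p) := by
          gcongr
          · exact rpow_sub_one_le_one_add_rpow hp ht
          · linarith
  · calc p * max s t ^ (p - 1) * d
        ≤ p * (2 * d) ^ (p - 1) * d := by
          gcongr
          linarith
      _ = p * 2 ^ (p - 1) * d ^ p := by
          rw [mul_rpow zero_le_two hd, mul_assoc, mul_assoc, ← rpow_add_one' hd (by linarith),
            sub_add_cancel, mul_assoc]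
      _ ≤ p * 2 ^ (p - 1) * (1 + t ^ p) * (d + d ^ p) := by
          rw [mul_assoc _ (1 + t ^ p)]
          gcongr
          nlinarith

lemma exists_abs_rpow_sub_rpow_le {p : ℝ} (hp : 0 ≤ p) :
    ∃ K > 0, ∀ s t : ℝ, 0 ≤ s → 0 ≤ t →
      |s ^ p - t ^ p| ≤ K * (1 + t ^ p) * (|s - t| + |s - t| ^ p) := by
  rcases le_total p 1 with hp₁ | hp₁
  · refine ⟨1, one_pos, fun s t hs ht =>
      (abs_rpow_sub_rpow_le_abs_sub_rpow hp hp₁ hs ht).trans ?_⟩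
    have := rpow_nonneg ht p
    have := rpow_nonneg (abs_nonneg (s - t)) p
    nlinarith [abs_nonneg (s - t)]
  · exact ⟨p * 2 ^ (p - 1), by positivity, fun s t hs ht =>
      abs_rpow_sub_rpow_le_of_one_le hp₁ hs ht⟩

noncomputable def gaussAbsMoment (q : ℝ) : ℝ := Gamma ((q + 1) / 2) / √π

lemma gaussAbsMoment_pos {q : ℝ} (hq : -1 < q) : 0 < gaussAbsMoment q := by
  have := Gamma_pos_of_pos (s := (q + 1) / 2) (by linarith)
  unfold gaussAbsMoment
  positivity

lemma gauss_sq {a : ℝ} (ha : 0 ≤ a) (y : ℝ) :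
    gauss a y ^ 2 = √(a / π) * exp (-a * y ^ 2) := by
  rw [gauss, mul_pow, ← rpow_natCast, ← rpow_mul (by positivity), ← exp_nat_mul, sqrt_eq_rpow]
  congr 2 <;> ring

lemma integral_abs_rpow_mul_exp_neg_mul_sq {b q : ℝ} (hb : 0 < b) (hq : -1 < q) :
    ∫ y : ℝ, |y| ^ q * exp (-b * y ^ 2) = Gamma ((q + 1) / 2) * b ^ (-(q + 1) / 2) := by
  have h_half := integral_rpow_mul_exp_neg_mul_rpow two_pos hq hb
  simp_rw [rpow_two] at h_half
  have h_even := integral_comp_abs (f := fun t : ℝ => t ^ q * exp (-b * t ^ 2))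
  simp only [sq_abs] at h_even
  rw [h_even, h_half]
  ring

lemma integral_abs_rpow_mul_gauss_sq {a q : ℝ} (ha : 0 < a) (hq : -1 < q) :
    ∫ y : ℝ, |y| ^ q * gauss a y ^ 2 = gaussAbsMoment q * a ^ (-q / 2) := by
  simp_rw [gauss_sq ha.le, mul_left_comm _ (√(a / π)), integral_const_mul,
    integral_abs_rpow_mul_exp_neg_mul_sq ha hq, sqrt_div' _ pi_pos.le, sqrt_eq_rpow a,
    gaussAbsMoment]
  rw [show -q / 2 = 1 / 2 + -(q + 1) / 2 by ring, rpow_add ha]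
  ring

lemma integral_gauss_sq {a : ℝ} (ha : 0 < a) : ∫ y : ℝ, gauss a y ^ 2 = 1 := by
  have h := integral_abs_rpow_mul_gauss_sq ha (q := 0) (by norm_num)
  simp only [rpow_zero, one_mul, gaussAbsMoment, zero_add, Gamma_one_half_eq, neg_zero,
    zero_div, mul_one] at h
  rw [h, div_self (sqrt_pos.mpr pi_pos).ne']

-- A non-integrable function has integral `0`, while this integral is positive.
lemma integrable_abs_rpow_mul_gauss_sq {a q : ℝ} (ha : 0 < a) (hq : -1 < q) :
    Integrable fun y : ℝ => |y| ^ q * gauss a y ^ 2 := by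
  refine Integrable.of_integral_ne_zero ?_
  rw [integral_abs_rpow_mul_gauss_sq ha hq]
  have := gaussAbsMoment_pos hq
  positivity

lemma integrable_gauss_sq {a : ℝ} (ha : 0 < a) : Integrable fun y : ℝ => gauss a y ^ 2 := by
  simpa using integrable_abs_rpow_mul_gauss_sq ha (q := 0) (by norm_num)

lemma abs_integral_comp_sub_mul_gauss_sq_sub_le {f : ℝ → ℝ} (hf : Continuous f)
    {a p B x : ℝ} (ha : 0 < a) (hp : -1 < p)
    (hB : ∀ y, |f (x - y) - f x| ≤ B * (|y| + |y| ^ p)) :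
    |(∫ y, f (x - y) * gauss a y ^ 2) - f x|
      ≤ B * (gaussAbsMoment 1 * a ^ (-1 / 2 : ℝ) + gaussAbsMoment p * a ^ (-p / 2)) := by
  have h_one := integrable_abs_rpow_mul_gauss_sq ha (q := 1) (by norm_num)
  have h_one_eq := integral_abs_rpow_mul_gauss_sq ha (q := 1) (by norm_num)
  simp only [rpow_one] at h_one h_one_eq
  have h_major : Integrable fun y => B * (|y| + |y| ^ p) * gauss a y ^ 2 := by
    refine ((h_one.add (integrable_abs_rpow_mul_gauss_sq ha hp)).const_mul B).congr
      (ae_of_all _ fun y => ?_)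
    simp only [Pi.add_apply]
    ring
  have h_diff : Integrable fun y => (f (x - y) - f x) * gauss a y ^ 2 := by
    refine h_major.mono' (by unfold gauss; fun_prop) (ae_of_all _ fun y => ?_)
    rw [norm_mul, norm_pow, norm_eq_abs, norm_eq_abs, sq_abs]
    exact mul_le_mul_of_nonneg_right (hB y) (sq_nonneg _)
  have h_eq : ∫ y, (f (x - y) - f x) * gauss a y ^ 2
      = (∫ y, f (x - y) * gauss a y ^ 2) - f x := by
    have h_const := (integrable_gauss_sq ha).const_mul (f x)
    simp_rw [sub_mul]
    rw [integral_sub _ h_const, integral_const_mul, integral_gauss_sq ha, mul_one]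
    refine (h_diff.add h_const).congr (ae_of_all _ fun y => ?_)
    simp only [Pi.add_apply]
    ring
  calc |(∫ y, f (x - y) * gauss a y ^ 2) - f x|
      = |∫ y, (f (x - y) - f x) * gauss a y ^ 2| := by rw [h_eq]
    _ ≤ ∫ y, |(f (x - y) - f x) * gauss a y ^ 2| := abs_integral_le_integral_abs
    _ ≤ ∫ y, B * (|y| + |y| ^ p) * gauss a y ^ 2 := by
        refine integral_mono h_diff.abs h_major fun y => ?_
        rw [abs_mul, abs_of_nonneg (sq_nonneg (gauss a y))]
        exact mul_le_mul_of_nonneg_right (hB y) (sq_nonneg _)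
    _ = B * (gaussAbsMoment 1 * a ^ (-1 / 2 : ℝ) + gaussAbsMoment p * a ^ (-p / 2)) := by
        simp_rw [mul_assoc, add_mul]
        rw [integral_const_mul, integral_add h_one (integrable_abs_rpow_mul_gauss_sq ha hp),
          integral_abs_rpow_mul_gauss_sq ha hp, h_one_eq]

/-- For `W(x) = |x|^p` there are `C, γ₀ > 0` with
`|(W ∗ g_a²)(x) - W(x)| ≤ C a^{-γ₀/2} (1 + |x|^p)` for all `a ≥ 1`, `x ∈ ℝ`. -/
theorem power_potential_convolution_error (p : ℝ) (hp : 0 < p) :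
    ∃ C γ₀ : ℝ, 0 < C ∧ 0 < γ₀ ∧ ∀ a : ℝ, 1 ≤ a → ∀ x : ℝ,
      |(∫ y : ℝ, |x - y| ^ p * gauss a y ^ 2) - |x| ^ p|
        ≤ C * a ^ (-(γ₀ / 2)) * (1 + |x| ^ p) := by
  obtain ⟨K, hK, hK_bound⟩ := exists_abs_rpow_sub_rpow_le hp.le
  have hM₁ : 0 < gaussAbsMoment 1 := gaussAbsMoment_pos (by norm_num)
  have hMp : 0 < gaussAbsMoment p := gaussAbsMoment_pos (by linarith)
  refine ⟨K * (gaussAbsMoment 1 + gaussAbsMoment p), min 1 p, by positivity,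
    lt_min one_pos hp, fun a ha x => ?_⟩
  have hpt : ∀ y, |(|x - y| ^ p - |x| ^ p)| ≤ K * (1 + |x| ^ p) * (|y| + |y| ^ p) := fun y => by
    have hy : |(|x - y| - |x|)| ≤ |y| := by simpa using abs_abs_sub_abs_le_abs_sub (x - y) x
    refine (hK_bound _ _ (abs_nonneg _) (abs_nonneg x)).trans ?_
    gcongr
  calc _ ≤ K * (1 + |x| ^ p) *
        (gaussAbsMoment 1 * a ^ (-1 / 2 : ℝ) + gaussAbsMoment p * a ^ (-p / 2)) :=
        abs_integral_comp_sub_mul_gauss_sq_sub_le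
          (continuous_abs.rpow_const fun _ => Or.inr hp.le) (by linarith) (by linarith) hpt
    _ ≤ K * (1 + |x| ^ p) * (gaussAbsMoment 1 * a ^ (-(min 1 p / 2))
          + gaussAbsMoment p * a ^ (-(min 1 p / 2))) := by
        gcongr
        · linarith [min_le_left 1 p]
        · linarith [min_le_right 1 p]
    _ = K * (gaussAbsMoment 1 + gaussAbsMoment p) * a ^ (-(min 1 p / 2)) * (1 + |x| ^ p) := by
        ring
end

section
/- For every β with 0 < β ≤ 2, every ε > 0, and all real numbers x, y, the inequality |x − y|^β ≤ (1 + ε)·|x|^β + (1 + 2^β/(4ε))·|y|^β holds. -/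
/-!
Since `|x - y| ≤ |x| + |y|`, it suffices to bound `(a + b) ^ β` for `a, b ≥ 0`. For `β ≤ 1` the
map `u ↦ u ^ β` is subadditive. For `β ≥ 1` it is convex, and splitting `a + b` with the weights
`(1 + ε)⁻¹` and `(1 + ε⁻¹)⁻¹`, which sum to `1`, gives
`(a + b) ^ β ≤ (1 + ε) ^ (β - 1) a ^ β + (1 + ε⁻¹) ^ (β - 1) b ^ β`. The first coefficient is at
most `1 + ε`; by Bernoulli's inequality the second is at most `1 + (β - 1) / ε`, and
`4 (β - 1) ≤ 2 ^ β` for `β ≤ 2`.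
-/

open Real

theorem Real.HolderConjugate.add_rpow_le {s t p a b : ℝ} (hst : s.HolderConjugate t)
    (hp : 1 ≤ p) (ha : 0 ≤ a) (hb : 0 ≤ b) :
    (a + b) ^ p ≤ s ^ (p - 1) * a ^ p + t ^ (p - 1) * b ^ p := by
  have hs := hst.pos
  have ht := hst.symm.pos
  have hconv := (convexOn_rpow hp).2 (Set.mem_Ici.2 (mul_nonneg hs.le ha))
    (Set.mem_Ici.2 (mul_nonneg ht.le hb)) hst.inv_nonneg hst.symm.inv_nonneg
    (by simpa using hst.inv_add_inv_eq_inv)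
  have hweight {w c : ℝ} (hw : 0 < w) (hc : 0 ≤ c) :
      w⁻¹ * (w * c) ^ p = w ^ (p - 1) * c ^ p := by
    rw [mul_rpow hw.le hc, rpow_sub_one hw.ne']
    field_simp
  simp only [smul_eq_mul, inv_mul_cancel_left₀ hs.ne', inv_mul_cancel_left₀ ht.ne'] at hconv
  rwa [hweight hs ha, hweight ht hb] at hconv

theorem Real.holderConjugate_one_add_one_add_inv {ε : ℝ} (hε : 0 < ε) :
    (1 + ε).HolderConjugate (1 + ε⁻¹) where
  inv_add_inv_eq_inv := by field_simp; ring
  left_pos := by positivity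
  right_pos := by positivity

theorem four_mul_sub_one_le_two_rpow {β : ℝ} (hβ : β ≤ 2) : 4 * (β - 1) ≤ (2 : ℝ) ^ β := by
  -- the tangent line of `2 ^ β` at `β = 2` has slope `4 log 2 < 4`
  have htangent := add_one_le_exp (log 2 * (β - 2))
  have hsplit : (2 : ℝ) ^ β = 4 * exp (log 2 * (β - 2)) := by
    rw [← rpow_def_of_pos two_pos, rpow_sub two_pos]
    norm_num
    ring
  have hlog_lt := log_two_lt_d9
  have hlog_pos := log_pos one_lt_two
  rw [hsplit]
  nlinarith

theorem one_add_inv_rpow_sub_one_le {β ε : ℝ} (hβ1 : 1 ≤ β) (hβ2 : β ≤ 2) (hε : 0 < ε) :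
    (1 + ε⁻¹) ^ (β - 1) ≤ 1 + 2 ^ β / (4 * ε) := by
  have hε_inv := inv_pos.2 hε
  calc (1 + ε⁻¹) ^ (β - 1) ≤ 1 + (β - 1) * ε⁻¹ :=
        rpow_one_add_le_one_add_mul_self (by linarith) (by linarith) (by linarith)
    _ = 1 + 4 * (β - 1) / (4 * ε) := by field_simp
    _ ≤ 1 + 2 ^ β / (4 * ε) := by gcongr; exact four_mul_sub_one_le_two_rpow hβ2

/-- For `0 < β ≤ 2`, `ε > 0` and all real `x, y`:
`|x - y|^β ≤ (1 + ε)|x|^β + (1 + 2^β/(4ε))|y|^β`. -/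
theorem abs_sub_rpow_young (β : ℝ) (hβ0 : 0 < β) (hβ2 : β ≤ 2) (ε : ℝ) (hε : 0 < ε)
    (x y : ℝ) :
    |x - y| ^ β ≤ (1 + ε) * |x| ^ β + (1 + 2 ^ β / (4 * ε)) * |y| ^ β := by
  have hx := abs_nonneg x
  have hy := abs_nonneg y
  refine (rpow_le_rpow (abs_nonneg _) (abs_sub x y) hβ0.le).trans ?_
  rcases le_total β 1 with hβ1 | hβ1
  · have hcoeff : 0 ≤ 2 ^ β / (4 * ε) := by positivity
    calc (|x| + |y|) ^ β ≤ |x| ^ β + |y| ^ β := rpow_add_le_add_rpow hx hy hβ0.le hβ1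
      _ ≤ _ := add_le_add (le_mul_of_one_le_left (by positivity) (by linarith))
          (le_mul_of_one_le_left (by positivity) (by linarith))
  · calc (|x| + |y|) ^ β ≤ (1 + ε) ^ (β - 1) * |x| ^ β + (1 + ε⁻¹) ^ (β - 1) * |y| ^ β :=
          (holderConjugate_one_add_one_add_inv hε).add_rpow_le hβ1 hx hy
      _ ≤ _ := by
          gcongr
          · exact rpow_le_self_of_one_le (by linarith) (by linarith)
          · exact one_add_inv_rpow_sub_one_le hβ1 hβ2 hε
end
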